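/- arXiv:1201.2880 — 4 statements merged into one kernel-verified Lean document; each statement's English description precedes it below -/
import Mathlib

section
/- Let d ≥ 1, let p, q be coprime integers with q > p ≥ 1, and suppose N ≥ (q-1)(d-1). Then there exist nonnegative vectors u_1, ..., u_N in ℝ^d such that every index set I ⊆ {1,...,N} satisfying ∑_{i ∈ I} u_i ⪰ (p/q) ∑_{i=1}^N u_i has |I| ≥ (d-1) + ⌈(pN - d + 1)/q⌉. -/
/-!
Take `u i = e (g i)` for a map `g : Fin N → Fin d` whose first `d - 1` fibres have size `r`,
where `p * r ≡ 1 [MOD q]` and `r < q`. If `I` dominates `p / q` of the total, then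
`p * #F ≤ q * #(I ∩ F)` on every fibre `F`; on a fibre of size `r` the right side is a multiple
of `q` while `p * r ≡ 1`, so the inequality improves by `q - 1`. Summing over the fibres gives
`p * N + (d - 1) * (q - 1) ≤ q * #I`.
-/

open Finset

theorem Nat.add_sub_one_le_of_dvd_of_mod_eq_one {a b q : ℕ} (ha : q ∣ a) (hb : b % q = 1)
    (hba : b ≤ a) : b + (q - 1) ≤ a := by
  obtain ⟨k, rfl⟩ := ha
  have hb' := Nat.div_add_mod b q
  have hq : 0 < q := Nat.pos_of_ne_zero (by rintro rfl; simp at hb; omega)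
  have hlt : b / q < k := Nat.lt_of_mul_lt_mul_left (a := q) (by omega)
  have := Nat.mul_le_mul_left q hlt
  rw [Nat.mul_succ] at this
  omega

section
variable {ι κ : Type*} [Fintype ι] [DecidableEq κ]

theorem mul_card_fiber_le_of_indicator_le (g : ι → κ) {p q : ℕ} (hq : 0 < q) {I : Finset ι}
    {j : κ} (h : (p / q : ℝ) * ∑ i, (if g i = j then 1 else 0 : ℝ) ≤
      ∑ i ∈ I, if g i = j then 1 else 0) :
    p * #{i | g i = j} ≤ q * #{i ∈ I | g i = j} := by
  rw [sum_boole, sum_boole, div_mul_eq_mul_div, div_le_iff₀ (by exact_mod_cast hq)] at h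
  exact_mod_cast (by linarith : (p : ℝ) * #{i | g i = j} ≤ q * #{i ∈ I | g i = j})

theorem mul_card_add_le_of_fiberwise_le [Fintype κ] (g : ι → κ) {p q : ℕ} {I : Finset ι}
    (S : Finset κ)
    (hS : ∀ j ∈ S, p * #{i | g i = j} % q = 1)
    (hI : ∀ j, p * #{i | g i = j} ≤ q * #{i ∈ I | g i = j}) :
    p * Fintype.card ι + #S * (q - 1) ≤ q * #I := by
  have hfiber (j : κ) :
      p * #{i | g i = j} + (if j ∈ S then q - 1 else 0) ≤ q * #{i ∈ I | g i = j} := by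
    split_ifs with hj
    · exact Nat.add_sub_one_le_of_dvd_of_mod_eq_one (dvd_mul_right _ _) (hS j hj) (hI j)
    · simpa using hI j
  calc p * Fintype.card ι + #S * (q - 1)
      = ∑ j, (p * #{i | g i = j} + if j ∈ S then q - 1 else 0) := by
        rw [sum_add_distrib, ← mul_sum, ← card_univ,
          card_eq_sum_card_fiberwise (f := g) (t := univ) (by simp), sum_ite_mem, univ_inter,
          sum_const, smul_eq_mul]
    _ ≤ ∑ j, q * #{i ∈ I | g i = j} := sum_le_sum fun j _ => hfiber j
    _ = q * #I := by rw [← mul_sum, ← card_eq_sum_card_fiberwise (by simp)]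

theorem exists_card_fiber_eq [Fintype κ] (c : κ → ℕ) (hc : ∑ j, c j = Fintype.card ι) :
    ∃ g : ι → κ, ∀ j, #{i | g i = j} = c j := by
  let e : ι ≃ Σ j, Fin (c j) := Fintype.equivOfCardEq (by simp [hc])
  refine ⟨fun i => (e i).1, fun j => ?_⟩
  rw [← Fintype.card_subtype, Fintype.card_congr
    ((e.subtypeEquiv fun _ => Iff.rfl).trans (Equiv.sigmaSubtype j)), Fintype.card_fin]
end

theorem exists_card_fiber_castSucc_eq {N r s : ℕ} (h : r * s ≤ N) :
    ∃ g : Fin N → Fin (s + 1), ∀ k : Fin s, #{i | g i = k.castSucc} = r := by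
  obtain ⟨g, hg⟩ := exists_card_fiber_eq (ι := Fin N)
    (Fin.snoc (α := fun _ => ℕ) (fun _ => r) (N - r * s)) (by
      simp only [Fin.sum_univ_castSucc, Fin.snoc_castSucc, Fin.snoc_last, sum_const, card_univ,
        Fintype.card_fin, smul_eq_mul]
      rw [mul_comm]
      exact Nat.add_sub_cancel' h)
  exact ⟨g, fun k => by simpa using hg k.castSucc⟩

theorem sub_one_add_ceil_le {N d p q m : ℕ} (hd : 1 ≤ d) (hq : 0 < q)
    (h : p * N + (d - 1) * (q - 1) ≤ q * m) :
    (d - 1 : ℤ) + ⌈((p * N - d + 1 : ℚ) / q)⌉ ≤ m := by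
  rw [← le_sub_iff_add_le', Int.ceil_le, div_le_iff₀ (by exact_mod_cast hq)]
  have h' := (Nat.cast_le (α := ℚ)).2 h
  push_cast [Nat.cast_sub hd, Nat.cast_sub (by omega : 1 ≤ q)] at h'
  push_cast
  linarith

theorem stmt_1 (N d p q : ℕ) (hd : 1 ≤ d) (hp : 1 ≤ p) (hpq : p < q)
    (hcop : Nat.Coprime p q) (hN : (q - 1) * (d - 1) ≤ N) :
    ∃ u : Fin N → Fin d → ℝ, (∀ i j, 0 ≤ u i j) ∧
      ∀ I : Finset (Fin N),
        (∀ j, (p / q : ℝ) * ∑ i, u i j ≤ ∑ i ∈ I, u i j) →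
        (d - 1 : ℤ) + ⌈((p * N - d + 1 : ℚ) / q)⌉ ≤ I.card := by
  obtain ⟨r, hrq, hpr⟩ := Nat.exists_mul_mod_eq_one_of_coprime hcop (by omega)
  obtain ⟨s, rfl⟩ : ∃ s, d = s + 1 := ⟨d - 1, by omega⟩
  rw [Nat.add_sub_cancel] at hN
  obtain ⟨g, hg⟩ :=
    exists_card_fiber_castSucc_eq (hN.trans' (Nat.mul_le_mul_right s (by omega : r ≤ q - 1)))
  refine ⟨fun i j => if g i = j then 1 else 0, fun i j => by positivity, fun I hI => ?_⟩
  refine sub_one_add_ceil_le hd (by omega) ?_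
  simpa using mul_card_add_le_of_fiberwise_le g (univ.map Fin.castSuccEmb) (by simp [hg, hpr])
    (fun j => mul_card_fiber_le_of_indicator_le g (by omega) (hI j))
end

section
/- Let p, q, N, N', s be nonnegative integers with p ≤ q < 2p, p > 0, and qN' ≤ (q-p)N + s. Then N' + s + ⌈((2p-q)(N-N') - s)/p⌉ ≤ s + ⌈(pN - s)/q⌉. -/
theorem stmt_6 (p q N N' s : ℕ) (hp : 0 < p) (hpq : p ≤ q) (hq2p : q < 2 * p)
    (h : (q : ℤ) * N' ≤ (q - p) * N + s) :
    (N' : ℤ) + s + ⌈(((2 * p - q : ℤ) * ((N : ℤ) - N') - s : ℚ) / p)⌉ ≤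
      (s : ℤ) + ⌈((p * N - s : ℚ) / q)⌉ := by
  have hpQ : (0 : ℚ) < p := by exact_mod_cast hp
  have hqQ : (0 : ℚ) < q := by exact_mod_cast hp.trans_le hpq
  have key : ⌈(((2 * p - q : ℤ) * ((N : ℤ) - N') - s : ℚ) / p + (N' : ℤ))⌉ ≤
      ⌈((p * N - s : ℚ) / q)⌉ := by
    apply Int.ceil_le_ceil
    rw [div_add' _ _ _ hpQ.ne', div_le_div_iff₀ hpQ hqQ]
    have hQ : (q : ℚ) * N' ≤ (q - p) * N + s := by exact_mod_cast h
    have hpqQ : (p : ℚ) ≤ q := by exact_mod_cast hpq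
    push_cast
    nlinarith [mul_le_mul_of_nonneg_left hQ (sub_nonneg.2 hpqQ)]
  rw [Int.ceil_add_intCast] at key
  linarith
end

section
/- For any N nonnegative vectors u_1, ..., u_N in ℝ^d, there exists a subset I ⊆ {1,...,N} with |I| ≤ (d-1) + ⌈(N - d + 1)/2⌉ such that ∑_{i ∈ I} u_i ⪰ (1/2) ∑_{i=1}^N u_i coordinatewise. -/
/-!
Round the fractional point `x = (1/2, …, 1/2)` inside the polytope
`P = {y ∈ [0,1]^N | ∑ yᵢ uᵢ = ∑ xᵢ uᵢ}`: an extreme point `y` of `P` has at most `d` fractional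
coordinates, since otherwise a linear dependence among the `uᵢ` with fractional `yᵢ` gives a
direction in which `y` can move both ways inside `P`. Then `{i | yᵢ ≠ 0}` and `{i | yᵢ ≠ 1}`
both cover half of `∑ uᵢ` (the first dominates `∑ yᵢ uᵢ`, the second `∑ (1 - yᵢ) uᵢ`), and
their sizes add up to at most `N + d`, so the smaller one has at most `(N + d) / 2` elements.
-/

open Finset Filter Topology Module

section Rounding

variable {ι V : Type*} [Fintype ι] [AddCommGroup V] [Module ℝ V] [FiniteDimensional ℝ V]

lemma exists_ne_zero_map_eq_zero_of_finrank_lt_card (A : (ι → ℝ) →ₗ[ℝ] V) (s : Finset ι)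
    (hs : finrank ℝ V < #s) : ∃ c, c ≠ 0 ∧ A c = 0 ∧ ∀ i ∉ s, c i = 0 := by
  let E := Function.ExtendByZero.linearMap ℝ ((↑) : s → ι)
  have hker : LinearMap.ker (A ∘ₗ E) ≠ ⊥ :=
    LinearMap.ker_ne_bot_of_finrank_lt (by simpa using hs)
  obtain ⟨c, hc, hc0⟩ := (Submodule.ne_bot_iff _).1 hker
  refine ⟨E c, fun h => hc0 ?_, hc, fun i hi => ?_⟩
  · exact Function.extend_injective Subtype.val_injective (0 : ι → ℝ) (h.trans (map_zero E).symm)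
  · exact Function.extend_apply' _ _ _ (by simpa using hi)

lemma eventually_add_smul_mem_Icc {y c : ι → ℝ} (hy : y ∈ Set.Icc 0 1)
    (hc : ∀ i, c i ≠ 0 → y i ∈ Set.Ioo 0 1) : ∀ᶠ t in 𝓝 (0 : ℝ), y + t • c ∈ Set.Icc 0 1 := by
  have : ∀ i, ∀ᶠ t in 𝓝 (0 : ℝ), y i + t * c i ∈ Set.Icc 0 1 := by
    intro i
    by_cases hci : c i = 0
    · simpa [hci] using Eventually.of_forall (f := 𝓝 (0 : ℝ)) fun _ => And.intro (hy.1 i) (hy.2 i)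
    · have hcont : Continuous fun t : ℝ => y i + t * c i := by fun_prop
      refine (hcont.continuousAt.eventually_mem (isOpen_Ioo.mem_nhds ?_)).mono
        fun _ ht => Set.Ioo_subset_Icc_self ht
      simpa using hc i hci
  filter_upwards [eventually_all.2 this] with t ht
  exact ⟨fun i => (ht i).1, fun i => (ht i).2⟩

lemma card_fractional_le_finrank_of_mem_extremePoints (A : (ι → ℝ) →ₗ[ℝ] V) {w : V}
    {y : ι → ℝ} (hy : y ∈ (Set.Icc 0 1 ∩ A ⁻¹' {w}).extremePoints ℝ) :
    #{i | y i ∈ Set.Ioo 0 1} ≤ finrank ℝ V := by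
  by_contra! hlt
  obtain ⟨c, hc0, hAc, hcs⟩ := exists_ne_zero_map_eq_zero_of_finrank_lt_card A _ hlt
  have hyP := hy.1
  have hmem : ∀ᶠ t in 𝓝 (0 : ℝ), y + t • c ∈ Set.Icc 0 1 ∩ A ⁻¹' {w} := by
    filter_upwards [eventually_add_smul_mem_Icc hyP.1 fun i hi => by
      by_contra h; exact hi (hcs i (by simpa using h))] with t ht
    exact ⟨ht, by simpa [hAc] using hyP.2⟩
  obtain ⟨t, ⟨ht, hnt⟩, ht0 : t ≠ 0⟩ :=
    (((hmem.and ((continuous_neg.tendsto' (0 : ℝ) 0 neg_zero).eventually hmem)).filter_mono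
      (nhdsWithin_le_nhds (s := {0}ᶜ))).and self_mem_nhdsWithin).exists
  have hseg : y ∈ openSegment ℝ (y + t • c) (y + (-t) • c) :=
    ⟨1 / 2, 1 / 2, by norm_num, by norm_num, by norm_num, by module⟩
  have htc : t • c = 0 := add_eq_left.1 (hy.2 ht hnt hseg)
  exact (smul_eq_zero.1 htc).elim ht0 hc0

lemma exists_mem_Icc_map_eq_card_fractional_le (A : (ι → ℝ) →ₗ[ℝ] V) {x : ι → ℝ}
    (hx : x ∈ Set.Icc 0 1) :
    ∃ y ∈ Set.Icc 0 1, A y = A x ∧ #{i | y i ∈ Set.Ioo 0 1} ≤ finrank ℝ V := by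
  have hfiber : IsClosed (A ⁻¹' {A x}) := by
    convert (LinearMap.ker A).closed_of_finiteDimensional.preimage (continuous_sub_right x)
    ext y
    simp [sub_eq_zero]
  obtain ⟨y, hy⟩ := (isCompact_Icc.inter_right hfiber).extremePoints_nonempty ⟨x, hx, rfl⟩
  exact ⟨y, hy.1.1, hy.1.2, card_fractional_le_finrank_of_mem_extremePoints A hy⟩

end Rounding

lemma sum_mul_le_sum_filter_ne_zero {ι : Type*} [Fintype ι] {y u : ι → ℝ} (hy : ∀ i, y i ≤ 1)
    (hu : ∀ i, 0 ≤ u i) : ∑ i, y i * u i ≤ ∑ i with y i ≠ 0, u i := by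
  rw [← sum_filter_of_ne fun i _ h => left_ne_zero_of_mul h]
  exact sum_le_sum fun i _ => mul_le_of_le_one_left (hu i) (hy i)

lemma le_sub_one_add_ceil_of_two_mul_le {N d k : ℕ} (hk : 2 * k ≤ N + d) :
    (k : ℤ) ≤ (d - 1 : ℤ) + ⌈(((N : ℚ) - d + 1) / 2)⌉ := by
  have : (k : ℤ) - d < ⌈(((N : ℚ) - d + 1) / 2)⌉ := by
    rw [Int.lt_ceil, lt_div_iff₀ two_pos]
    push_cast
    linarith [show (2 * k : ℚ) ≤ N + d by exact_mod_cast hk]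
  omega

lemma card_ne_zero_add_card_ne_one_le {ι : Type*} [Fintype ι] [DecidableEq ι] {y : ι → ℝ}
    (hy : y ∈ Set.Icc 0 1) :
    #{i | y i ≠ 0} + #{i | 1 - y i ≠ 0} ≤ Fintype.card ι + #{i | y i ∈ Set.Ioo 0 1} := by
  rw [← card_union_add_card_inter]
  refine add_le_add (card_le_univ _) (card_le_card fun i hi => ?_)
  simp only [mem_inter, mem_filter, mem_univ, true_and, sub_ne_zero] at hi ⊢
  exact ⟨(hy.1 i).lt_of_ne' hi.1, (hy.2 i).lt_of_ne hi.2.symm⟩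

theorem stmt_9 (N d : ℕ) (u : Fin N → Fin d → ℝ) (hu : ∀ i j, 0 ≤ u i j) :
    ∃ I : Finset (Fin N),
      (I.card : ℤ) ≤ (d - 1 : ℤ) + ⌈(((N : ℚ) - d + 1) / 2)⌉ ∧
      ∀ j, (1 / 2 : ℝ) * ∑ i, u i j ≤ ∑ i ∈ I, u i j := by
  obtain ⟨y, hy, hAy, hfrac⟩ := exists_mem_Icc_map_eq_card_fractional_le
    (Matrix.vecMulLinear (Matrix.of u)) (x := fun _ => 1 / 2)
    ⟨fun _ => by norm_num, fun _ => by norm_num⟩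
  have hy_half (j : Fin d) : ∑ i, y i * u i j = 1 / 2 * ∑ i, u i j := by
    simpa [Matrix.vecMul, dotProduct, mul_sum] using congrFun hAy j
  have hcard := card_ne_zero_add_card_ne_one_le hy
  rw [Fintype.card_fin] at hcard
  rw [Module.finrank_fin_fun] at hfrac
  have hsupp (j : Fin d) : 1 / 2 * ∑ i, u i j ≤ ∑ i with y i ≠ 0, u i j :=
    (hy_half j).ge.trans (sum_mul_le_sum_filter_ne_zero hy.2 (hu · j))
  have hcosupp (j : Fin d) : 1 / 2 * ∑ i, u i j ≤ ∑ i with 1 - y i ≠ 0, u i j := by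
    refine le_trans ?_ (sum_mul_le_sum_filter_ne_zero (fun i => sub_le_self 1 (hy.1 i)) (hu · j))
    simp only [sub_mul, one_mul, sum_sub_distrib, hy_half]
    linarith
  rcases le_total #{i | y i ≠ 0} #{i | 1 - y i ≠ 0} with h | h
  · exact ⟨_, le_sub_one_add_ceil_of_two_mul_le (by omega), hsupp⟩
  · exact ⟨_, le_sub_one_add_ceil_of_two_mul_le (by omega), hcosupp⟩
end

section
/- Let d ≥ 2 and N ≥ d - 1. Define vectors u_1, ..., u_N in ℝ^d by u_i = e_i for 1 ≤ i ≤ d-1 and u_i = e_d for i ≥ d, where e_j are standard basis vectors. Then every index set I with ∑_{i ∈ I} u_i ⪰ (1/2) ∑_{i=1}^N u_i satisfies |I| ≥ (d-1) + ⌈(N - d + 1)/2⌉. -/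
theorem stmt_10 (N d : ℕ) (hd : 2 ≤ d) (hN : d - 1 ≤ N)
    (u : Fin N → Fin d → ℝ)
    (hu : ∀ i j, u i j =
      if (i : ℕ) < d - 1 then (if (j : ℕ) = (i : ℕ) then 1 else 0)
      else (if (j : ℕ) = d - 1 then 1 else 0)) :
    ∀ I : Finset (Fin N),
      (∀ j, (1 / 2 : ℝ) * ∑ i, u i j ≤ ∑ i ∈ I, u i j) →
      (d - 1 : ℤ) + ⌈(((N : ℚ) - d + 1) / 2)⌉ ≤ I.card := by
  intro I hI
  classical
  set A := I.filter (fun i : Fin N => (i : ℕ) < d - 1) with hAdef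
  set B := I.filter (fun i : Fin N => ¬ (i : ℕ) < d - 1) with hBdef
  have hcard : A.card + B.card = I.card :=
    Finset.card_filter_add_card_filter_not _
  -- Step 1: every j < d-1 is in I
  have hmem : ∀ j : ℕ, (hj : j < d - 1) → (⟨j, lt_of_lt_of_le hj hN⟩ : Fin N) ∈ I := by
    intro j hj
    have hjd : j < d := lt_of_lt_of_le hj (Nat.sub_le d 1)
    have hjN : j < N := lt_of_lt_of_le hj hN
    have huval : ∀ i : Fin N, u i ⟨j, hjd⟩ = if i = (⟨j, hjN⟩ : Fin N) then 1 else 0 := by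
      intro i
      rw [hu]
      by_cases h : (i : ℕ) < d - 1
      · simp only [h, if_true]
        by_cases h2 : (i : ℕ) = j
        · simp [Fin.ext_iff, h2]
        · simp [Fin.ext_iff, h2, Ne.symm h2]
      · simp only [h, if_false]
        have h1 : j ≠ d - 1 := by omega
        have h2 : i ≠ (⟨j, hjN⟩ : Fin N) := by
          simp [Fin.ext_iff]; omega
        simp [h1, h2]
    have hsum : ∑ i, u i ⟨j, hjd⟩ = 1 := by
      simp [huval]
    have hsumI : ∑ i ∈ I, u i ⟨j, hjd⟩ =
        if (⟨j, hjN⟩ : Fin N) ∈ I then 1 else 0 := by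
      simp [huval]
    have := hI ⟨j, hjd⟩
    rw [hsum, hsumI] at this
    by_contra hc
    rw [if_neg hc] at this
    norm_num at this
  -- Step 2: A.card = d - 1 (at least)
  have hAcard : d - 1 ≤ A.card := by
    have hsub : Finset.univ.map ⟨Fin.castLE hN, Fin.castLE_injective hN⟩ ⊆ A := by
      intro i hi
      simp only [Finset.mem_map, Finset.mem_univ, true_and] at hi
      obtain ⟨a, ha⟩ := hi
      have hi1 : (i : ℕ) < d - 1 := by
        rw [← ha]; exact a.isLt
      have hi2 : i ∈ I := by
        have := hmem (i : ℕ) hi1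
        convert this using 1
      rw [hAdef]
      exact Finset.mem_filter.mpr ⟨hi2, hi1⟩
    calc d - 1 = (Finset.univ.map ⟨Fin.castLE hN, Fin.castLE_injective hN⟩).card := by simp
      _ ≤ A.card := Finset.card_le_card hsub
  -- Step 3: coordinate d-1
  have hd1 : d - 1 < d := by omega
  have huval2 : ∀ i : Fin N, u i ⟨d - 1, hd1⟩ = if (i : ℕ) < d - 1 then 0 else 1 := by
    intro i
    rw [hu]
    by_cases h : (i : ℕ) < d - 1
    · have : (d - 1 : ℕ) ≠ (i : ℕ) := by omega
      simp [h, this]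
    · simp [h]
  have hsum2 : ∑ i, u i ⟨d - 1, hd1⟩ = (N - (d - 1) : ℕ) := by
    rw [Finset.sum_congr rfl (fun i _ => huval2 i)]
    rw [Finset.sum_ite, Finset.sum_const, Finset.sum_const]
    simp only [smul_eq_mul, mul_zero, mul_one, zero_add, nsmul_eq_mul]
    have h1 : (Finset.univ.filter (fun i : Fin N => ¬ (i : ℕ) < d - 1)).card
        = N - (d - 1) := by
      have := Finset.card_filter_add_card_filter_not
        (s := (Finset.univ : Finset (Fin N))) (p := fun i : Fin N => (i : ℕ) < d - 1)
      have h2 : (Finset.univ.filter (fun i : Fin N => (i : ℕ) < d - 1)).card = d - 1 := by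
        have : Finset.univ.filter (fun i : Fin N => (i : ℕ) < d - 1)
            = Finset.univ.map ⟨Fin.castLE hN, Fin.castLE_injective hN⟩ := by
          ext i
          simp only [Finset.mem_filter, Finset.mem_univ, true_and, Finset.mem_map,
            Function.Embedding.coeFn_mk]
          constructor
          · intro h; exact ⟨⟨i, h⟩, by simp [Fin.ext_iff]⟩
          · rintro ⟨a, rfl⟩; exact a.isLt
        rw [this]; simp
      simp only [Finset.card_univ, Fintype.card_fin] at this
      omega
    rw [h1]
  have hsumI2 : ∑ i ∈ I, u i ⟨d - 1, hd1⟩ = B.card := by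
    rw [Finset.sum_congr rfl (fun i _ => huval2 i)]
    rw [Finset.sum_ite, Finset.sum_const, Finset.sum_const]
    simp [hBdef]
  have hkey := hI ⟨d - 1, hd1⟩
  rw [hsum2, hsumI2] at hkey
  -- deduce nat inequality
  have hnat : N - (d - 1) ≤ 2 * B.card := by
    have : ((N - (d - 1) : ℕ) : ℝ) ≤ 2 * (B.card : ℝ) := by linarith
    exact_mod_cast this
  -- finish
  have hceil : ⌈(((N : ℚ) - d + 1) / 2)⌉ ≤ (B.card : ℤ) := by
    rw [Int.ceil_le]
    rw [div_le_iff₀ (by norm_num : (0:ℚ) < 2)]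
    have hZ : (N : ℤ) - d + 1 ≤ (B.card : ℤ) * 2 := by omega
    exact_mod_cast hZ
  have : (d - 1 : ℤ) ≤ (A.card : ℤ) := by omega
  omega
end
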